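/- Let (h,c) ∈ ℕ × {0,1,2} with (h,c) ≠ (0,0) and let k ∈ ℕ. Then for every separation (B₁, B₂) of the graph D̂_k^{(h,c)} of order q < k such that both induced subgraphs on B₁ ∖ B₂ and on B₂ ∖ B₁ are connected, at least one of B₁, B₂ has at most (2q+1)² vertices. In other words, the parametric graph ⟨D̂_k^{(h,c)}⟩_k is f-tightly connected for f(q) = (2q+1)². -/

import Mathlib

open SimpleGraph

/-- `H` is a minor of `G`: branch sets are nonempty, connected, pairwise disjoint,
and every edge of `H` is realized by an edge of `G` between the branch sets. -/
def IsMinor {V W : Type*} (H : SimpleGraph V) (G : SimpleGraph W) : Prop :=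
  ∃ S : V → Set W,
    (∀ a, (G.induce (S a)).Connected) ∧
    (∀ a b, a ≠ b → Disjoint (S a) (S b)) ∧
    (∀ a b, H.Adj a b → ∃ x ∈ S a, ∃ y ∈ S b, G.Adj x y)

/-- `H` is an `X`-minor of `G`: additionally every branch set meets `X`. -/
def IsMinorOn {V W : Type*} (H : SimpleGraph V) (G : SimpleGraph W) (X : Set W) : Prop :=
  ∃ S : V → Set W,
    (∀ a, (G.induce (S a)).Connected) ∧
    (∀ a, (S a ∩ X).Nonempty) ∧
    (∀ a b, a ≠ b → Disjoint (S a) (S b)) ∧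
    (∀ a b, H.Adj a b → ∃ x ∈ S a, ∃ y ∈ S b, G.Adj x y)

/-- The `(k × k)`-grid graph. -/
def gridGraph (k : ℕ) : SimpleGraph (Fin k × Fin k) :=
  SimpleGraph.fromRel fun p q =>
    (p.1 = q.1 ∧ (p.2 : ℕ) + 1 = (q.2 : ℕ)) ∨ (p.2 = q.2 ∧ (p.1 : ℕ) + 1 = (q.1 : ℕ))

/-- `bg(G, X)`: the largest `k` such that the `(k × k)`-grid is an `X`-minor of `G`. -/
noncomputable def bgAnn {V : Type*} (G : SimpleGraph V) (X : Set V) : ℕ :=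
  sSup {k | IsMinorOn (gridGraph k) G X}

/-- The Hadwiger number: the largest `t` with `K_t` a minor of `G`. -/
noncomputable def hw {V : Type*} (G : SimpleGraph V) : ℕ :=
  sSup {t | IsMinor (⊤ : SimpleGraph (Fin t)) G}

/-- The adjacency relation of the mixed surface grid of order `k` with `b` blocks,
crosscap positions `Ic` and handle positions `Ih`. -/
def msgRel (k b : ℕ) (Ic Ih : Finset ℕ) (p q : Fin k × ZMod (4 * b * k)) : Prop :=
  (p.1 = q.1 ∧ q.2 = p.2 + 1) ∨
  (p.2 = q.2 ∧ (p.1 : ℕ) + 1 = (q.1 : ℕ)) ∨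
  ((p.1 : ℕ) = 0 ∧ (q.1 : ℕ) = 0 ∧
    ((∃ i ∈ Ic, ∃ j ∈ Finset.Icc 1 (2 * k),
        p.2 = ((4 * k * (i - 1) + j : ℕ) : ZMod (4 * b * k)) ∧
        q.2 = ((4 * k * (i - 1) + 2 * k + j : ℕ) : ZMod (4 * b * k))) ∨
     (∃ i ∈ Ih, ∃ j ∈ Finset.Icc 1 k,
        ((p.2 = ((4 * k * (i - 1) + j : ℕ) : ZMod (4 * b * k)) ∧
          q.2 = ((4 * k * (i - 1) + 3 * k - j + 1 : ℕ) : ZMod (4 * b * k))) ∨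
         (p.2 = ((4 * k * (i - 1) + k + j : ℕ) : ZMod (4 * b * k)) ∧
          q.2 = ((4 * k * (i - 1) + 4 * k + j - 1 : ℕ) : ZMod (4 * b * k)))))))

/-- The mixed surface grid of order `k` with `b` blocks, crosscaps at the positions of `Ic`
and handles at the positions of `Ih`. -/
def mixedSurfaceGrid (k b : ℕ) (Ic Ih : Finset ℕ) : SimpleGraph (Fin k × ZMod (4 * b * k)) :=
  SimpleGraph.fromRel (msgRel k b Ic Ih)

/-- The Dyck-grid `D_k^{(h,c)}`. -/
def dyckGrid (k h c : ℕ) : SimpleGraph (Fin k × ZMod (4 * (h + c + 1) * k)) :=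
  mixedSurfaceGrid k (h + c + 1) (Finset.Icc (h + 2) (h + c + 1)) (Finset.Icc 2 (h + 1))

/-- The reduced Dyck-grid `D̃_k^{(h,c)}` (no plain annulus block). -/
def reducedDyckGrid (k h c : ℕ) : SimpleGraph (Fin k × ZMod (4 * (h + c) * k)) :=
  mixedSurfaceGrid k (h + c) (Finset.Icc (h + 1) (h + c)) (Finset.Icc 1 h)

/-- `(A, B)` is a separation of `G`. -/
def IsSep {V : Type*} (G : SimpleGraph V) (A B : Set V) : Prop :=
  A ∪ B = Set.univ ∧ ∀ u v, G.Adj u v → u ∈ A \ B → v ∉ B \ A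

/-- `Z` is an `α`-balanced separator for `S` in `G`. -/
def IsBalSep {V : Type*} (G : SimpleGraph V) (α : ℝ) (S Z : Set V) : Prop :=
  ∀ C : (G.induce Zᶜ).ConnectedComponent,
    ((((Subtype.val '' C.supp) ∩ S).ncard : ℝ)) ≤ α * (S.ncard : ℝ)

/-- `S` is `(q, α)`-well-linked in `G`. -/
def WellLinked {V : Type*} (G : SimpleGraph V) (q : ℕ) (α : ℝ) (S : Set V) : Prop :=
  ∀ Z : Set V, Z.ncard ≤ q → ¬ IsBalSep G α S Z

/-- `T` is a tangle of order `k` in `G`. -/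
def IsTangle {V : Type*} (G : SimpleGraph V) (k : ℕ) (T : Set (Set V × Set V)) : Prop :=
  (∀ p ∈ T, IsSep G p.1 p.2 ∧ (p.1 ∩ p.2).ncard < k) ∧
  (∀ A B : Set V, IsSep G A B → (A ∩ B).ncard < k →
      (((A, B) ∈ T ∧ (B, A) ∉ T) ∨ ((B, A) ∈ T ∧ (A, B) ∉ T))) ∧
  (∀ p q r, p ∈ T → q ∈ T → r ∈ T → p.1 ∪ q.1 ∪ r.1 ≠ Set.univ)

/-- The tangle `𝒯_S` induced by a `(q, α)`-well-linked set `S`. -/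
def wlTangle {V : Type*} (G : SimpleGraph V) (q : ℕ) (α : ℝ) (S : Set V) :
    Set (Set V × Set V) :=
  {p | IsSep G p.1 p.2 ∧ (p.1 ∩ p.2).ncard ≤ q ∧ α * (S.ncard : ℝ) < ((S ∩ p.2).ncard : ℝ)}

/-- `F` is `S`-free in `G`. -/
def SFree {V : Type*} (G : SimpleGraph V) (α : ℝ) (S F : Set V) : Prop :=
  ∀ A B : Set V, IsSep G A B → (A ∩ B).ncard < F.ncard →
    (F ⊆ A → α * (S.ncard : ℝ) < ((A ∩ S).ncard : ℝ)) ∧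
    (F ⊆ B → α * (S.ncard : ℝ) < ((B ∩ S).ncard : ℝ))

/-- `S` is strongly linked in `G`. -/
def StronglyLinked {V : Type*} (G : SimpleGraph V) (S : Set V) : Prop :=
  ∀ S₁ S₂ : Set V, S₁ ∪ S₂ = S → Disjoint S₁ S₂ → S₁.Nonempty → S₂.Nonempty →
    ∀ A₁ A₂ : Set V, IsSep G A₁ A₂ → S₁ ⊆ A₁ → S₂ ⊆ A₂ →
      min S₁.ncard S₂.ncard ≤ (A₁ ∩ A₂).ncard

/-- The `(k × 2k)`-grid with the appropriate vertical edges removed (before deleting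
degree-one vertices). -/
def wallPre (k : ℕ) : SimpleGraph (Fin k × Fin (2 * k)) :=
  SimpleGraph.fromRel fun p q =>
    (p.1 = q.1 ∧ (p.2 : ℕ) + 1 = (q.2 : ℕ)) ∨
    (p.2 = q.2 ∧ (p.1 : ℕ) + 1 = (q.1 : ℕ) ∧ ((p.1 : ℕ) + (p.2 : ℕ)) % 2 = 1)

/-- The vertices of the elementary `k`-wall: vertices of `wallPre` of degree at least two. -/
def wallVerts (k : ℕ) : Set (Fin k × Fin (2 * k)) :=
  {v | ∃ a b, a ≠ b ∧ (wallPre k).Adj v a ∧ (wallPre k).Adj v b}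

/-- The elementary `k`-wall. -/
def elemWall (k : ℕ) : SimpleGraph (wallVerts k) :=
  (wallPre k).induce (wallVerts k)

/-- `(f, p)` is a subdivision of `H` embedded as a subgraph of `G`. -/
def IsSubdivEmbed {V W : Type*} (H : SimpleGraph V) (G : SimpleGraph W)
    (f : V → W) (p : ∀ u v, H.Adj u v → G.Walk (f u) (f v)) : Prop :=
  Function.Injective f ∧
  (∀ u v (h : H.Adj u v), (p u v h).IsPath) ∧
  (∀ u v (h : H.Adj u v), (p u v h).support = (p v u h.symm).support) ∧
  (∀ u v (h : H.Adj u v), ∀ w ∈ (p u v h).support, w ∈ Set.range f → w = f u ∨ w = f v) ∧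
  (∀ u v u' v' (h : H.Adj u v) (h' : H.Adj u' v'), s(u, v) ≠ s(u', v') →
    ∀ w : W, w ∈ (p u v h).support → w ∈ (p u' v' h').support →
      ((w = f u ∨ w = f v) ∧ (w = f u' ∨ w = f v')))

/-- The vertex set in `G` of the `i`-th row of an embedded `k`-wall. -/
def wallRowSet {V : Type*} {G : SimpleGraph V} (k : ℕ)
    (f : wallVerts k → V) (p : ∀ u v, (elemWall k).Adj u v → G.Walk (f u) (f v))
    (i : Fin k) : Set V :=
  (f '' {v | v.val.1 = i}) ∪
  {w | ∃ u v, ∃ h : (elemWall k).Adj u v,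
      u.val.1 = i ∧ v.val.1 = i ∧ w ∈ (p u v h).support}

/-- The vertex set in `G` of the `j`-th column of an embedded `k`-wall. -/
def wallColSet {V : Type*} {G : SimpleGraph V} (k : ℕ)
    (f : wallVerts k → V) (p : ∀ u v, (elemWall k).Adj u v → G.Walk (f u) (f v))
    (j : Fin k) : Set V :=
  (f '' {v | (v.val.2 : ℕ) / 2 = (j : ℕ)}) ∪
  {w | ∃ u v, ∃ h : (elemWall k).Adj u v,
      (u.val.2 : ℕ) / 2 = (j : ℕ) ∧ (v.val.2 : ℕ) / 2 = (j : ℕ) ∧ w ∈ (p u v h).support}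

/-- The tangle `𝒯_W` induced by an embedded `k`-wall. -/
def wallTangle {V : Type*} (G : SimpleGraph V) (k : ℕ)
    (f : wallVerts k → V) (p : ∀ u v, (elemWall k).Adj u v → G.Walk (f u) (f v)) :
    Set (Set V × Set V) :=
  {AB | IsSep G AB.1 AB.2 ∧ (AB.1 ∩ AB.2).ncard < k ∧
    ∃ i j : Fin k, wallRowSet k f p i ⊆ AB.2 \ AB.1 ∧ wallColSet k f p j ⊆ AB.2 \ AB.1}

/-- All vertices of `G` used by an embedded `k`-wall. -/
def wallSupport {V : Type*} {G : SimpleGraph V} (k : ℕ)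
    (f : wallVerts k → V) (p : ∀ u v, (elemWall k).Adj u v → G.Walk (f u) (f v)) : Set V :=
  Set.range f ∪ {w | ∃ u v, ∃ h : (elemWall k).Adj u v, w ∈ (p u v h).support}

/-- `(T, β)` is a tree-decomposition of `G`. -/
def IsTreeDecomp {V : Type*} {ι : Type*} (G : SimpleGraph V) (T : SimpleGraph ι)
    (β : ι → Set V) : Prop :=
  T.IsTree ∧
  (∀ v : V, ∃ t, v ∈ β t) ∧
  (∀ u v, G.Adj u v → ∃ t, u ∈ β t ∧ v ∈ β t) ∧
  (∀ v : V, (T.induce {t | v ∈ β t}).Connected)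

/-- The torso of a tree-decomposition `(T, β)` of `G` at a node `t`. -/
def torso {V : Type*} {ι : Type*} (G : SimpleGraph V) (T : SimpleGraph ι)
    (β : ι → Set V) (t : ι) : SimpleGraph (β t) :=
  SimpleGraph.fromRel fun u v =>
    G.Adj u v ∨ ∃ t', T.Adj t t' ∧ (u : V) ∈ β t' ∧ (v : V) ∈ β t'

/-- The graph `G^c` on `V(G)` with edge set `E(G) ∪ E(G_t)`. -/
def withTorsoEdges {V : Type*} {ι : Type*} (G : SimpleGraph V) (T : SimpleGraph ι)
    (β : ι → Set V) (t : ι) : SimpleGraph V :=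
  SimpleGraph.fromRel fun u v =>
    G.Adj u v ∨ ∃ (hu : u ∈ β t) (hv : v ∈ β t), (torso G T β t).Adj ⟨u, hu⟩ ⟨v, hv⟩

/-- Interior vertices of the `(t+2) × (t+2)`-grid. -/
def gridInterior (t : ℕ) (p : Fin (t + 2) × Fin (t + 2)) : Prop :=
  0 < (p.1 : ℕ) ∧ (p.1 : ℕ) < t + 1 ∧ 0 < (p.2 : ℕ) ∧ (p.2 : ℕ) < t + 1

/-- The `(t+2) × (t+2)`-grid with all edges whose two endpoints have degree
less than four removed. -/
def crossedPre (t : ℕ) : SimpleGraph (Fin (t + 2) × Fin (t + 2)) :=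
  SimpleGraph.fromRel fun a b =>
    ((a.1 = b.1 ∧ (a.2 : ℕ) + 1 = (b.2 : ℕ)) ∨ (a.2 = b.2 ∧ (a.1 : ℕ) + 1 = (b.1 : ℕ))) ∧
    (gridInterior t a ∨ gridInterior t b)

/-- The line graph of `K`. -/
def lineGraph' {W : Type*} (K : SimpleGraph W) : SimpleGraph K.edgeSet :=
  SimpleGraph.fromRel fun e f => ∃ x, x ∈ (e : Sym2 W) ∧ x ∈ (f : Sym2 W)

/-- `G` contains a crossed `t`-grid as a subgraph. -/
def ContainsCrossedGrid {V : Type*} (t : ℕ) (G : SimpleGraph V) : Prop :=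
  ∃ (n : ℕ) (K : SimpleGraph (Fin n))
    (f : Fin (t + 2) × Fin (t + 2) → Fin n)
    (p : ∀ u v, (crossedPre t).Adj u v → K.Walk (f u) (f v)),
    IsSubdivEmbed (crossedPre t) K f p ∧
    (∀ w : Fin n, ∃ u v h, w ∈ (p u v h).support) ∧
    (∀ e ∈ K.edgeSet, ∃ u v h, e ∈ (p u v h).edges) ∧
    (∀ u v (h : (crossedPre t).Adj u v), 2 ≤ (p u v h).length) ∧
    ∃ φ : K.edgeSet → V, Function.Injective φ ∧
      ∀ e e', (lineGraph' K).Adj e e' → G.Adj (φ e) (φ e')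

/-- The satellite-augmented reduced Dyck-grid `D̂_k^{(h,c)}`. -/
def hatRel (k h c : ℕ)
    (a b : (Fin k × ZMod (4 * (h + c) * k)) ⊕ (Fin (h + c) × Fin k)) : Prop :=
  (∃ p q, a = Sum.inl p ∧ b = Sum.inl q ∧
     msgRel k (h + c) (Finset.Icc (h + 1) (h + c)) (Finset.Icc 1 h) p q) ∨
  (∃ s p, a = Sum.inr s ∧ b = Sum.inl p ∧ (p.1 : ℕ) = 0 ∧
     ∃ j ∈ Finset.Icc 1 4,
       p.2 = ((4 * k * (s.1 : ℕ) + 4 * (s.2 : ℕ) + j : ℕ) : ZMod (4 * (h + c) * k)))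

def hatDyckGrid (k h c : ℕ) :
    SimpleGraph ((Fin k × ZMod (4 * (h + c) * k)) ⊕ (Fin (h + c) × Fin k)) :=
  SimpleGraph.fromRel (hatRel k h c)

/-!
The separator `S = B₁ ∩ B₂` has fewer than `k` vertices, so some row and some column of the
cylindrical grid avoid it. Rows and columns are images of paths, so each row or column avoiding
`S` lies on one side of the separation, and crossing lines lie on the same side; say the free
row and column lie in `B₁ \ B₂`. Then every grid vertex of `B₂` lies in a row and a column that
both meet `S`, and the first neighbour of every satellite in `B₂ \ B₁` lies in a column meeting
`S`. This leaves at most `q² + 2q ≤ (2q+1)²` vertices for `B₂`.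
-/

section Separation

variable {V : Type*} {G : SimpleGraph V} {A B : Set V}

lemma IsSep.symm (hsep : IsSep G A B) : IsSep G B A :=
  ⟨by rw [Set.union_comm, hsep.1], fun u v huv hu hv => hsep.2 v u huv.symm hv hu⟩

lemma IsSep.mem_diff_of_adj (hsep : IsSep G A B) {u v : V} (huv : G.Adj u v)
    (hu : u ∈ A \ B) (hv : v ∉ A ∩ B) : v ∈ A \ B := by
  have hvAB : v ∈ A ∪ B := hsep.1 ▸ Set.mem_univ v
  by_cases hvA : v ∈ A
  · exact ⟨hvA, fun hvB => hv ⟨hvA, hvB⟩⟩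
  · exact absurd ⟨hvAB.resolve_left hvA, hvA⟩ (hsep.2 u v huv hu)

lemma IsSep.apply_mem_diff_of_reachable {W : Type*} {H : SimpleGraph W}
    (hsep : IsSep G A B) (f : H →g G) (hf : ∀ w, f w ∉ A ∩ B) {a b : W}
    (hab : H.Reachable a b) (ha : f a ∈ A \ B) : f b ∈ A \ B := by
  obtain ⟨p⟩ := hab
  induction p with
  | nil => exact ha
  | cons hadj _ ih => exact ih (hsep.mem_diff_of_adj (f.map_adj hadj) ha (hf _))

end Separation

lemma Set.ncard_preimage_le_of_injective {α β : Type*} {f : α → β} (hf : f.Injective)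
    {s : Set β} (hs : s.Finite) : (f ⁻¹' s).ncard ≤ s.ncard :=
  (Set.ncard_image_of_injective _ hf).symm.trans_le
    (Set.ncard_le_ncard (Set.image_preimage_subset f s) hs)

lemma Set.exists_notMem_of_ncard_lt {α : Type*} [Finite α] {s : Set α}
    (hs : s.ncard < Nat.card α) : ∃ a, a ∉ s :=
  (Set.ne_univ_iff_exists_notMem s).mp fun h => by simp [h] at hs

lemma ZMod.natCast_injOn_Iio (n : ℕ) : Set.InjOn (Nat.cast : ℕ → ZMod n) (Set.Iio n) :=
  fun a ha b hb hab => by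
    simpa [ZMod.val_cast_of_lt ha, ZMod.val_cast_of_lt hb] using congrArg ZMod.val hab

section HatDyckGrid

abbrev HatDyckVertex (k h c : ℕ) : Type :=
  (Fin k × ZMod (4 * (h + c) * k)) ⊕ (Fin (h + c) × Fin k)

variable {h c k : ℕ}

lemma hatDyckGrid_adj_row {i : Fin k} {z w : ZMod (4 * (h + c) * k)} (hne : z ≠ w)
    (hw : w = z + 1) : (hatDyckGrid k h c).Adj (Sum.inl (i, z)) (Sum.inl (i, w)) :=
  (fromRel_adj (hatRel k h c) _ _).mpr
    ⟨by simpa using hne, Or.inl <| Or.inl ⟨_, _, rfl, rfl, Or.inl ⟨rfl, hw⟩⟩⟩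

lemma hatDyckGrid_adj_col {i i' : Fin k} (hii' : (i : ℕ) + 1 = i')
    (z : ZMod (4 * (h + c) * k)) :
    (hatDyckGrid k h c).Adj (Sum.inl (i, z)) (Sum.inl (i', z)) :=
  (fromRel_adj (hatRel k h c) _ _).mpr
    ⟨by simp only [ne_eq, Sum.inl.injEq, Prod.mk.injEq, and_true]; rintro rfl; omega,
      Or.inl <| Or.inl ⟨_, _, rfl, rfl, Or.inr <| Or.inl ⟨rfl, hii'⟩⟩⟩

/-- The neighbour of the satellite `s` on the outer cycle given by `j = 1` in `hatRel`. -/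
def satelliteAnchor (s : Fin (h + c) × Fin k) : ZMod (4 * (h + c) * k) :=
  ((4 * k * (s.1 : ℕ) + 4 * (s.2 : ℕ) + 1 : ℕ) : ZMod (4 * (h + c) * k))

lemma hatDyckGrid_adj_satelliteAnchor (s : Fin (h + c) × Fin k) :
    (hatDyckGrid k h c).Adj (Sum.inr s) (Sum.inl (⟨0, s.2.pos⟩, satelliteAnchor s)) :=
  (fromRel_adj (hatRel k h c) _ _).mpr
    ⟨by simp, Or.inl <| Or.inr ⟨s, _, rfl, rfl, rfl, 1, by simp, rfl⟩⟩

lemma satelliteAnchor_injective :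
    (satelliteAnchor : Fin (h + c) × Fin k → ZMod (4 * (h + c) * k)).Injective := by
  have hlt (s : Fin (h + c) × Fin k) :
      4 * k * (s.1 : ℕ) + 4 * (s.2 : ℕ) + 1 < 4 * (h + c) * k := by
    have := s.1.isLt
    have := s.2.isLt
    nlinarith
  intro s t hst
  have hval := ZMod.natCast_injOn_Iio _ (hlt s) (hlt t) hst
  apply finProdFinEquiv.injective
  ext
  simp only [finProdFinEquiv_apply_val]
  linarith

def hatDyckRow (i : Fin k) : pathGraph (4 * (h + c) * k) →g hatDyckGrid k h c where
  toFun m := Sum.inl (i, ((m : ℕ) : ZMod (4 * (h + c) * k)))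
  map_rel' {m m'} hmm' := by
    have hne : ((m : ℕ) : ZMod (4 * (h + c) * k)) ≠ (m' : ℕ) := fun heq =>
      hmm'.ne (Fin.ext (ZMod.natCast_injOn_Iio _ m.isLt m'.isLt heq))
    rcases pathGraph_adj.mp hmm' with hsucc | hsucc
    · exact hatDyckGrid_adj_row hne (by rw [← hsucc, Nat.cast_succ])
    · exact (hatDyckGrid_adj_row hne.symm (by rw [← hsucc, Nat.cast_succ])).symm

def hatDyckColumn (z : ZMod (4 * (h + c) * k)) : pathGraph k →g hatDyckGrid k h c where
  toFun i := Sum.inl (i, z)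
  map_rel' hii' := by
    rcases pathGraph_adj.mp hii' with hsucc | hsucc
    · exact hatDyckGrid_adj_col hsucc z
    · exact (hatDyckGrid_adj_col hsucc z).symm

def rowsMeeting (S : Set (HatDyckVertex k h c)) : Set (Fin k) :=
  {i | ∃ z, Sum.inl (i, z) ∈ S}

def colsMeeting (S : Set (HatDyckVertex k h c)) : Set (ZMod (4 * (h + c) * k)) :=
  {z | ∃ i, Sum.inl (i, z) ∈ S}

variable {A B : Set (HatDyckVertex k h c)}

lemma IsSep.hatDyckColumn_mem_diff (hsep : IsSep (hatDyckGrid k h c) A B)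
    {z : ZMod (4 * (h + c) * k)} (hz : z ∉ colsMeeting (A ∩ B)) {i : Fin k}
    (hi : Sum.inl (i, z) ∈ A \ B) (i' : Fin k) : Sum.inl (i', z) ∈ A \ B :=
  hsep.apply_mem_diff_of_reachable (hatDyckColumn z) (fun j hj => hz ⟨j, hj⟩)
    (pathGraph_preconnected _ i i') hi

variable [NeZero (4 * (h + c) * k)]

lemma ncard_rowsMeeting_le (S : Set (HatDyckVertex k h c)) :
    (rowsMeeting S).ncard ≤ S.ncard :=
  calc (rowsMeeting S).ncard ≤ (Prod.fst '' (Sum.inl ⁻¹' S)).ncard :=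
        Set.ncard_le_ncard (fun i ⟨z, hz⟩ => ⟨(i, z), hz, rfl⟩)
    _ ≤ (Sum.inl ⁻¹' S).ncard := Set.ncard_image_le
    _ ≤ S.ncard := Set.ncard_preimage_le_of_injective Sum.inl_injective (Set.toFinite S)

lemma ncard_colsMeeting_le (S : Set (HatDyckVertex k h c)) :
    (colsMeeting S).ncard ≤ S.ncard :=
  calc (colsMeeting S).ncard ≤ (Prod.snd '' (Sum.inl ⁻¹' S)).ncard :=
        Set.ncard_le_ncard (fun z ⟨i, hi⟩ => ⟨(i, z), hi, rfl⟩)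
    _ ≤ (Sum.inl ⁻¹' S).ncard := Set.ncard_image_le
    _ ≤ S.ncard := Set.ncard_preimage_le_of_injective Sum.inl_injective (Set.toFinite S)

lemma IsSep.hatDyckRow_mem_diff (hsep : IsSep (hatDyckGrid k h c) A B) {i : Fin k}
    (hi : i ∉ rowsMeeting (A ∩ B)) {z : ZMod (4 * (h + c) * k)}
    (hz : Sum.inl (i, z) ∈ A \ B) (z' : ZMod (4 * (h + c) * k)) : Sum.inl (i, z') ∈ A \ B := by
  have key := hsep.apply_mem_diff_of_reachable (hatDyckRow i) (fun m hm => hi ⟨_, hm⟩)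
    (pathGraph_preconnected _ ⟨z.val, z.val_lt⟩ ⟨z'.val, z'.val_lt⟩)
  simpa [hatDyckRow, ZMod.natCast_zmod_val] using key (by simpa [hatDyckRow] using hz)

lemma IsSep.hatDyckGrid_mem_diff_of_free (hsep : IsSep (hatDyckGrid k h c) A B)
    {i₀ : Fin k} {z₀ : ZMod (4 * (h + c) * k)} (hi₀ : i₀ ∉ rowsMeeting (A ∩ B))
    (hz₀ : z₀ ∉ colsMeeting (A ∩ B)) (hhub : Sum.inl (i₀, z₀) ∈ A \ B) {i : Fin k}
    {z : ZMod (4 * (h + c) * k)} (hiz : i ∉ rowsMeeting (A ∩ B) ∨ z ∉ colsMeeting (A ∩ B)) :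
    Sum.inl (i, z) ∈ A \ B := by
  rcases hiz with hi | hz
  · exact hsep.hatDyckRow_mem_diff hi (hsep.hatDyckColumn_mem_diff hz₀ hhub i) z
  · exact hsep.hatDyckColumn_mem_diff hz (hsep.hatDyckRow_mem_diff hi₀ hhub z) i

variable {i₀ : Fin k} {z₀ : ZMod (4 * (h + c) * k)}

lemma IsSep.hatDyckGrid_mem_meeting_of_mem (hsep : IsSep (hatDyckGrid k h c) A B)
    (hi₀ : i₀ ∉ rowsMeeting (A ∩ B)) (hz₀ : z₀ ∉ colsMeeting (A ∩ B))
    (hhub : Sum.inl (i₀, z₀) ∈ A \ B) {i : Fin k} {z : ZMod (4 * (h + c) * k)}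
    (hiz : Sum.inl (i, z) ∈ B) : i ∈ rowsMeeting (A ∩ B) ∧ z ∈ colsMeeting (A ∩ B) := by
  by_contra hfree
  exact (hsep.hatDyckGrid_mem_diff_of_free hi₀ hz₀ hhub (not_and_or.mp hfree)).2 hiz

lemma IsSep.satelliteAnchor_mem_colsMeeting (hsep : IsSep (hatDyckGrid k h c) A B)
    (hi₀ : i₀ ∉ rowsMeeting (A ∩ B)) (hz₀ : z₀ ∉ colsMeeting (A ∩ B))
    (hhub : Sum.inl (i₀, z₀) ∈ A \ B) {s : Fin (h + c) × Fin k} (hs : Sum.inr s ∈ B \ A) :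
    satelliteAnchor s ∈ colsMeeting (A ∩ B) := by
  have hadj := hatDyckGrid_adj_satelliteAnchor s
  have hanchor : Sum.inl (⟨0, s.2.pos⟩, satelliteAnchor s) ∈ B := by
    by_contra hnB
    have hA : Sum.inl (⟨0, s.2.pos⟩, satelliteAnchor s) ∈ A ∪ B := hsep.1 ▸ Set.mem_univ _
    exact hsep.2 _ _ hadj.symm ⟨hA.resolve_right hnB, hnB⟩ hs
  exact (hsep.hatDyckGrid_mem_meeting_of_mem hi₀ hz₀ hhub hanchor).2

lemma IsSep.hatDyckGrid_subset_of_free (hsep : IsSep (hatDyckGrid k h c) A B)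
    (hi₀ : i₀ ∉ rowsMeeting (A ∩ B)) (hz₀ : z₀ ∉ colsMeeting (A ∩ B))
    (hhub : Sum.inl (i₀, z₀) ∈ A \ B) :
    B ⊆ Sum.inl '' (rowsMeeting (A ∩ B) ×ˢ colsMeeting (A ∩ B)) ∪
      Sum.inr '' (satelliteAnchor ⁻¹' colsMeeting (A ∩ B)) ∪ A ∩ B := by
  rintro (⟨i, z⟩ | s) hv
  · exact Or.inl <| Or.inl ⟨(i, z), hsep.hatDyckGrid_mem_meeting_of_mem hi₀ hz₀ hhub hv, rfl⟩
  · by_cases hA : Sum.inr s ∈ A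
    · exact Or.inr ⟨hA, hv⟩
    · exact Or.inl <| Or.inr
        ⟨s, hsep.satelliteAnchor_mem_colsMeeting hi₀ hz₀ hhub ⟨hv, hA⟩, rfl⟩

lemma IsSep.hatDyckGrid_ncard_le_of_free (hsep : IsSep (hatDyckGrid k h c) A B)
    (hi₀ : i₀ ∉ rowsMeeting (A ∩ B)) (hz₀ : z₀ ∉ colsMeeting (A ∩ B))
    (hhub : Sum.inl (i₀, z₀) ∈ A \ B) :
    B.ncard ≤ (2 * (A ∩ B).ncard + 1) ^ 2 := by
  set q := (A ∩ B).ncard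
  have hR := ncard_rowsMeeting_le (A ∩ B)
  have hC := ncard_colsMeeting_le (A ∩ B)
  have hsat := Set.ncard_preimage_le_of_injective satelliteAnchor_injective
    (Set.toFinite (colsMeeting (A ∩ B)))
  calc B.ncard
      ≤ (rowsMeeting (A ∩ B)).ncard * (colsMeeting (A ∩ B)).ncard +
          (satelliteAnchor ⁻¹' colsMeeting (A ∩ B)).ncard + q := by
        refine (Set.ncard_le_ncard (hsep.hatDyckGrid_subset_of_free hi₀ hz₀ hhub)).trans ?_
        refine (Set.ncard_union_le _ _).trans (Nat.add_le_add_right ?_ _)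
        refine (Set.ncard_union_le _ _).trans_eq ?_
        rw [Set.ncard_image_of_injective _ Sum.inl_injective,
          Set.ncard_image_of_injective _ Sum.inr_injective, Set.ncard_prod]
    _ ≤ q * q + q + q := by gcongr; exact hsat.trans hC
    _ ≤ (2 * q + 1) ^ 2 := by nlinarith

end HatDyckGrid

theorem hatDyckGrid_tightlyConnected_general
    (h c k : ℕ) (hhc : 1 ≤ h + c)
    (B₁ B₂ : Set ((Fin k × ZMod (4 * (h + c) * k)) ⊕ (Fin (h + c) × Fin k)))
    (hsep : IsSep (hatDyckGrid k h c) B₁ B₂)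
    (hord : (B₁ ∩ B₂).ncard < k) :
    B₁.ncard ≤ (2 * (B₁ ∩ B₂).ncard + 1) ^ 2 ∨
    B₂.ncard ≤ (2 * (B₁ ∩ B₂).ncard + 1) ^ 2 := by
  have hk : 0 < k := (Nat.zero_le _).trans_lt hord
  have : NeZero (4 * (h + c) * k) := ⟨Nat.mul_ne_zero (by omega) hk.ne'⟩
  obtain ⟨i₀, hi₀⟩ := Set.exists_notMem_of_ncard_lt <|
    (ncard_rowsMeeting_le (B₁ ∩ B₂)).trans_lt (by simpa using hord)
  obtain ⟨z₀, hz₀⟩ := Set.exists_notMem_of_ncard_lt <|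
    (ncard_colsMeeting_le (B₁ ∩ B₂)).trans_lt (by rw [Nat.card_zmod]; nlinarith)
  have hhub : Sum.inl (i₀, z₀) ∉ B₁ ∩ B₂ := fun hS => hi₀ ⟨z₀, hS⟩
  rcases (hsep.1 ▸ Set.mem_univ _ : Sum.inl (i₀, z₀) ∈ B₁ ∪ B₂) with h₁ | h₂
  · exact Or.inr (hsep.hatDyckGrid_ncard_le_of_free hi₀ hz₀ ⟨h₁, fun h₂ => hhub ⟨h₁, h₂⟩⟩)
  · rw [Set.inter_comm] at hi₀ hz₀ hhub ⊢
    exact Or.inl (hsep.symm.hatDyckGrid_ncard_le_of_free hi₀ hz₀ ⟨h₂, fun h₁ => hhub ⟨h₂, h₁⟩⟩)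

/-- Lemma 7.10: the satellite-augmented Dyck-grid `D̂_k^{(h,c)}` is
`f`-tightly connected for `f(q) = (2q+1)²`. -/
theorem hatDyckGrid_tightlyConnected
    (h c k : ℕ) (hc : c ≤ 2) (hhc : 1 ≤ h + c)
    (B₁ B₂ : Set ((Fin k × ZMod (4 * (h + c) * k)) ⊕ (Fin (h + c) × Fin k)))
    (hsep : IsSep (hatDyckGrid k h c) B₁ B₂)
    (hord : (B₁ ∩ B₂).ncard < k)
    (hconn₁ : ((hatDyckGrid k h c).induce (B₁ \ B₂)).Connected)
    (hconn₂ : ((hatDyckGrid k h c).induce (B₂ \ B₁)).Connected) :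
    B₁.ncard ≤ (2 * (B₁ ∩ B₂).ncard + 1) ^ 2 ∨
    B₂.ncard ≤ (2 * (B₁ ∩ B₂).ncard + 1) ^ 2 :=
  hatDyckGrid_tightlyConnected_general h c k hhc B₁ B₂ hsep hord
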